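/- arXiv:2111.12675 — 3 statements merged into one kernel-verified Lean document; each statement's English description precedes it below -/
import Mathlib

section
/- Let e : ℤ → ℝ satisfy Δ^1 e = β·δ_n + (1-β)·δ_{n+1} with β ∈ [0, 1/(2N)) for some integer N ≥ 1. Then |(Δ^N e)[n - N + 2]| = |1 - β·N| ≥ 1/2. -/
/-- Kronecker delta at `n` on sequences `ℤ → ℝ`. -/
def kdelta (n : ℤ) : ℤ → ℝ := fun k => if k = n then 1 else 0

/-- `N`-th forward finite difference. -/
def fd : ℕ → (ℤ → ℝ) → (ℤ → ℝ)
  | 0, f => f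
  | N + 1, f => fun k => fd N f (k + 1) - fd N f k

lemma fd_succ_eq (m : ℕ) (f : ℤ → ℝ) (k : ℤ) :
    fd (m + 1) f k = fd m (fd 1 f) k := by
  induction m generalizing k with
  | zero => rfl
  | succ m ih =>
    rw [show fd (m + 1 + 1) f k = fd (m + 1) f (k + 1) - fd (m + 1) f k from rfl, ih, ih]
    rfl

lemma fd_comb (a b : ℝ) (f g : ℤ → ℝ) (m : ℕ) (k : ℤ) :
    fd m (fun x => a * f x + b * g x) k = a * fd m f k + b * fd m g k := by
  induction m generalizing k with
  | zero => rfl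
  | succ m ih => simp only [fd, ih]; ring

lemma fd_zero_of_lt (n : ℤ) (m : ℕ) : ∀ k : ℤ, k + m < n → fd m (kdelta n) k = 0 := by
  induction m with
  | zero => intro k hk; simp only [fd, kdelta]; simp at hk ⊢; omega
  | succ m ih =>
    intro k hk
    have h1 : (k + 1) + (m : ℤ) < n := by push_cast at hk; omega
    have h2 : k + (m : ℤ) < n := by push_cast at hk; omega
    simp only [fd, ih _ h1, ih _ h2, sub_zero]

lemma fd_at_edge (n : ℤ) (m : ℕ) : fd m (kdelta n) (n - m) = 1 := by
  induction m with
  | zero => simp [fd, kdelta]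
  | succ m ih =>
    have h0 : fd m (kdelta n) (n - ((m : ℤ) + 1)) = 0 :=
      fd_zero_of_lt n m _ (by omega)
    have h1 : n - ((m : ℤ) + 1) + 1 = n - m := by ring
    show fd m (kdelta n) (n - ((m : ℤ) + 1) + 1) - fd m (kdelta n) (n - ((m : ℤ) + 1)) = 1
    rw [h1, ih, h0, sub_zero]

lemma fd_at_edge1 (n : ℤ) (m : ℕ) : fd m (kdelta n) (n - m + 1) = -m := by
  induction m with
  | zero => simp [fd, kdelta]
  | succ m ih =>
    have h1 : n - ((m : ℤ) + 1) + 1 + 1 = n - m + 1 := by ring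
    have h2 : n - ((m : ℤ) + 1) + 1 = n - m := by ring
    push_cast
    show fd m (kdelta n) (n - ((m : ℤ) + 1) + 1 + 1)
        - fd m (kdelta n) (n - ((m : ℤ) + 1) + 1) = -((m : ℝ) + 1)
    rw [h1, h2, ih, fd_at_edge]
    ring

theorem value_near_left_edge (e : ℤ → ℝ) (β : ℝ) (n : ℤ) (N : ℕ)
    (hN : 1 ≤ N) (hβ0 : 0 ≤ β) (hβ1 : β < 1 / (2 * N))
    (he : fd 1 e = fun k => β * kdelta n k + (1 - β) * kdelta (n + 1) k) :
    |fd N e (n - N + 2)| = |1 - β * N| ∧ |1 - β * N| ≥ 1 / 2 := by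
  obtain ⟨m, rfl⟩ : ∃ m, N = m + 1 := ⟨N - 1, by omega⟩
  have hval : fd (m + 1) e (n - (m + 1 : ℕ) + 2) = 1 - β * (m + 1 : ℕ) := by
    rw [fd_succ_eq, he]
    have hk : (n : ℤ) - ((m : ℤ) + 1) + 2 = n - m + 1 := by ring
    push_cast [hk]
    rw [fd_comb, fd_at_edge1]
    have : (n : ℤ) - m + 1 = (n + 1) - m := by ring
    rw [this, fd_at_edge]
    ring
  have hβN : β * ((m : ℝ) + 1) < 1 / 2 := by
    have hNpos : (0 : ℝ) < (m : ℝ) + 1 := by positivity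
    have hβ1' : β < 1 / (2 * ((m : ℝ) + 1)) := by push_cast at hβ1; exact hβ1
    have h2 : β * (2 * ((m : ℝ) + 1)) < 1 := by
      rw [lt_div_iff₀ (by positivity)] at hβ1'
      linarith
    linarith
  have hpos : 1 - β * ((m : ℝ) + 1) ≥ 1 / 2 := by linarith
  constructor
  · rw [hval]
  · push_cast
    rw [abs_of_nonneg (by linarith)]
    exact hpos
end

section
/- Let γ : ℤ → ℝ and ε : ℤ → ℝ with ε[k] ∈ 2λ·ℤ for all k, and set y = γ − ε. If |(Δ^N γ)[k]| < λ for all k, then M_λ((Δ^N y)[k]) = (Δ^N γ)[k] for all k ∈ ℤ. -/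
/-- Ideal (centered) modulo with threshold `λ`. -/
noncomputable def idealMod (lam x : ℝ) : ℝ :=
  2 * lam * (Int.fract (x / (2 * lam) + 1 / 2) - 1 / 2)

lemma fd_sub (N : ℕ) (f g : ℤ → ℝ) (k : ℤ) :
    fd N (f - g) k = fd N f k - fd N g k := by
  induction N generalizing k with
  | zero => simp [fd]
  | succ n ih => simp [fd, ih]; ring

lemma fd_mult (lam : ℝ) (N : ℕ) (ε : ℤ → ℝ)
    (hε : ∀ k : ℤ, ∃ m : ℤ, ε k = 2 * lam * m) (k : ℤ) :
    ∃ m : ℤ, fd N ε k = 2 * lam * m := by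
  induction N generalizing k with
  | zero => exact hε k
  | succ n ih =>
    obtain ⟨a, ha⟩ := ih (k + 1)
    obtain ⟨b, hb⟩ := ih k
    exact ⟨a - b, by simp [fd, ha, hb]; ring⟩

theorem usalg_annihilation (lam : ℝ) (hlam : 0 < lam) (N : ℕ)
    (γ ε y : ℤ → ℝ)
    (hε : ∀ k : ℤ, ∃ m : ℤ, ε k = 2 * lam * m)
    (hy : y = γ - ε)
    (hγ : ∀ k : ℤ, |fd N γ k| < lam) :
    ∀ k : ℤ, idealMod lam (fd N y k) = fd N γ k := by
  intro k
  obtain ⟨m, hm⟩ := fd_mult lam N ε hε k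
  have hyk : fd N y k = fd N γ k - 2 * lam * m := by
    rw [hy, fd_sub, hm]
  have h2 : (0:ℝ) < 2 * lam := by linarith
  have habs := abs_lt.mp (hγ k)
  set t := fd N γ k / (2 * lam) with ht
  have ht1 : -(1/2) ≤ t := (le_div_iff₀ h2).mpr (by linarith [habs.1])
  have ht2 : t < 1/2 := (div_lt_iff₀ h2).mpr (by linarith [habs.2])
  have harg : fd N y k / (2 * lam) + 1 / 2 = (t + 1 / 2) + (-m : ℤ) := by
    push_cast
    rw [hyk, ht]
    field_simp
    ring
  have hfr : Int.fract (fd N y k / (2 * lam) + 1 / 2) = t + 1 / 2 := by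
    rw [harg, Int.fract_add_intCast, Int.fract_eq_self.mpr ⟨by linarith, by linarith⟩]
  rw [idealMod, hfr, ht]
  field_simp
  ring
end

section
/- With the setup of the single-fold thresholding lemma (r = 2λ_h·s·(β·Δ^{N-1}δ_n + (1−β)·Δ^{N-1}δ_{n+1}), y = g − r, |g[k]| < λ_h/(2N) for all k, β ∈ [1/(2N), 1−1/(2N)], k_m = n−N+1): the sign of the fold is recovered as s = −sign(y[k_m]). -/
lemma fd_zero_of (m : ℕ) : ∀ (f : ℤ → ℝ) (k : ℤ),
    (∀ j : ℤ, k ≤ j → j ≤ k + m → f j = 0) → fd m f k = 0 := by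
  induction m with
  | zero => intro f k h; exact h k le_rfl (by simp)
  | succ m ih =>
    intro f k h
    show fd m f (k + 1) - fd m f k = 0
    rw [ih f (k + 1) (fun j h1 h2 => h j (by omega) (by push_cast at h2 ⊢; omega)),
      ih f k (fun j h1 h2 => h j h1 (by push_cast at h2 ⊢; omega))]
    ring

lemma fd_delta_eq_one (m : ℕ) : ∀ a : ℤ, fd m (kdelta a) (a - m) = 1 := by
  induction m with
  | zero => intro a; simp [fd, kdelta]
  | succ m ih =>
    intro a
    show fd m (kdelta a) (a - (m + 1 : ℕ) + 1) - fd m (kdelta a) (a - (m + 1 : ℕ)) = 1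
    have h1 : a - ((m : ℤ) + 1) + 1 = a - m := by ring
    have h2 : fd m (kdelta a) (a - (m + 1 : ℕ)) = 0 := by
      apply fd_zero_of
      intro j hj1 hj2
      simp only [kdelta]
      push_cast at hj1 hj2
      rw [if_neg (by omega)]
    push_cast at h2 ⊢
    rw [h1, ih a, h2]; ring

theorem single_fold_sign_recovery (N : ℕ) (hN : 1 ≤ N) (lamh : ℝ) (hlamh : 0 < lamh)
    (s : ℝ) (hs : s = 1 ∨ s = -1) (β : ℝ)
    (hβ0 : 1 / (2 * N) ≤ β) (hβ1 : β ≤ 1 - 1 / (2 * N)) (n : ℤ)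
    (r y g : ℤ → ℝ)
    (hr : r = fun k => 2 * lamh * s *
      (β * fd (N - 1) (kdelta n) k + (1 - β) * fd (N - 1) (kdelta (n + 1)) k))
    (hy : y = g - r)
    (hg : ∀ k : ℤ, |g k| < lamh / (2 * N)) :
    s = -Real.sign (y (n - N + 1)) := by
  set k : ℤ := n - N + 1 with hk
  have hNpos : (0 : ℝ) < N := by exact_mod_cast hN
  have hcast : ((N - 1 : ℕ) : ℤ) = (N : ℤ) - 1 := by
    have := hN; omega
  have h1 : fd (N - 1) (kdelta n) k = 1 := by
    have : k = n - ((N - 1 : ℕ) : ℤ) := by rw [hcast]; omega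
    rw [this]; exact fd_delta_eq_one (N - 1) n
  have h2 : fd (N - 1) (kdelta (n + 1)) k = 0 := by
    apply fd_zero_of
    intro j hj1 hj2
    rw [hcast] at hj2
    simp only [kdelta]
    rw [if_neg (by omega)]
  have hyk : y k = g k - 2 * lamh * s * β := by
    rw [hy, hr]; simp [h1, h2]
  have hβ : lamh / (2 * N) < 2 * lamh * β := by
    have : lamh / (2 * N) < 2 * lamh * (1 / (2 * N)) := by
      rw [mul_one_div]
      rw [div_lt_div_iff₀ (by positivity) (by positivity)]
      nlinarith
    calc lamh / (2 * N) < 2 * lamh * (1 / (2 * N)) := this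
      _ ≤ 2 * lamh * β := by
        apply mul_le_mul_of_nonneg_left hβ0 (by positivity)
  have hgk := hg k
  rcases hs with hs | hs
  · subst hs
    have : y k < 0 := by
      rw [hyk]
      have := abs_lt.mp hgk
      nlinarith
    rw [Real.sign_of_neg this]; ring
  · subst hs
    have : 0 < y k := by
      rw [hyk]
      have := abs_lt.mp hgk
      nlinarith
    rw [Real.sign_of_pos this]
end
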